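/- Let G be a finite simple bipartite graph with at least one edge, parts V_1 and V_2, and maximum degree Δ. Then (2/√Δ) · Σ_{v ∈ V_1} √(deg(v)) ≤ E(G) ≤ 2 · Σ_{v ∈ V_1} √(deg(v)). -/

import Mathlib

/-!
Write `A` for the adjacency matrix; since `A` is symmetric, `(A Aᵀ)^{1/2} = |A|`, so
`E_G(v) = |A|ᵥᵥ`. The diagonal of powers of a symmetric matrix obeys the Cauchy–Schwarz inequality
`((M^{a+b})ᵥᵥ)² ≤ (M^{2a})ᵥᵥ (M^{2b})ᵥᵥ`. Applied to `|A|` and to `|A|^{1/2}`, together with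
`(A²)ᵥᵥ = deg v` and `(A⁴)ᵥᵥ ≤ deg(v)² Δ`, it gives `√(deg v) / √Δ ≤ E_G(v) ≤ √(deg v)`.

For the bipartite graph, the sign matrix `S = diag(±1)` of the bipartition anticommutes with `A`,
so `tr (S p(A)) = p(0) tr S` for every polynomial `p`. As `|A| = p(A)` for a polynomial
interpolating `|·|` on the spectrum with `p(0) = 0`, the vertex energies of `V₁` and of its
complement have the same sum, whence `E(G) = 2 ∑_{v ∈ V₁} E_G(v)`.
-/

open Matrix Finset

/-- The energy of the vertex `i` of a finite simple graph `G`: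
the `(i,i)` entry of `|A| = (A Aᴴ)^{1/2}`, where `A` is the adjacency matrix. -/
noncomputable def vertexEnergy {n : ℕ} (G : SimpleGraph (Fin n)) [DecidableRel G.Adj]
    (i : Fin n) : ℝ :=
  (let hA := Matrix.posSemidef_self_mul_conjTranspose (G.adjMatrix ℝ)
   ((hA.1.eigenvectorUnitary : Matrix (Fin n) (Fin n) ℝ) *
      diagonal ((RCLike.ofReal : ℝ → ℝ) ∘ Real.sqrt ∘ hA.1.eigenvalues) *
      (star hA.1.eigenvectorUnitary : Matrix (Fin n) (Fin n) ℝ))) i i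

/-- The energy of a finite simple graph: the sum of the energies of its vertices. -/
noncomputable def graphEnergy {n : ℕ} (G : SimpleGraph (Fin n)) [DecidableRel G.Adj] : ℝ :=
  ∑ i, vertexEnergy G i

open Polynomial

lemma exists_cfc_eq_aeval {A : Type*} [TopologicalSpace A] [Ring A] [StarRing A] [Algebra ℝ A]
    {p : A → Prop} [ContinuousFunctionalCalculus ℝ A p] {a : A} (ha : p a)
    (hfin : (spectrum ℝ a).Finite) (f : ℝ → ℝ) :
    ∃ q : ℝ[X], q.eval 0 = f 0 ∧ cfc f a = aeval a q := by
  classical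
  let s := insert 0 hfin.toFinset
  have hq : ∀ x ∈ s, (Lagrange.interpolate s id f).eval x = f x := fun x hx =>
    Lagrange.eval_interpolate_at_node (v := id) f (Set.injOn_id _) hx
  refine ⟨Lagrange.interpolate s id f, hq 0 (mem_insert_self _ _), ?_⟩
  rw [← cfc_polynomial _ a ha]
  exact cfc_congr fun x hx => (hq x (mem_insert_of_mem (hfin.mem_toFinset.mpr hx))).symm

namespace Matrix

variable {m : Type*} [Fintype m] [DecidableEq m]

section Symmetric

variable {M : Matrix m m ℝ}

lemma IsHermitian.pow_add_apply_self (hM : M.IsHermitian) (a b : ℕ) (i : m) :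
    (M ^ (a + b)) i i = ∑ k, (M ^ a) i k * (M ^ b) i k := by
  rw [pow_add, mul_apply]
  congr! 2 with k
  simpa using (hM.pow b).apply i k

lemma IsHermitian.pow_add_self_apply_self_nonneg (hM : M.IsHermitian) (a : ℕ) (i : m) :
    0 ≤ (M ^ (a + a)) i i := by
  rw [hM.pow_add_apply_self]
  exact sum_nonneg fun k _ => mul_self_nonneg _

lemma IsHermitian.sq_pow_add_apply_self_le (hM : M.IsHermitian) (a b : ℕ) (i : m) :
    (M ^ (a + b)) i i ^ 2 ≤ (M ^ (a + a)) i i * (M ^ (b + b)) i i := by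
  simp only [hM.pow_add_apply_self, ← sq]
  exact sum_mul_sq_le_sq_mul_sq _ _ _

end Symmetric

lemma trace_mul_pow_succ_eq_zero_of_anticomm {R : Type*} [CommRing R] [IsAddTorsionFree R]
    {S A : Matrix m m R} (h : S * A = -(A * S)) (k : ℕ) : trace (S * A ^ (k + 1)) = 0 := by
  refine self_eq_neg.mp ?_
  calc trace (S * A ^ (k + 1)) = trace (S * A * A ^ k) := by rw [pow_succ', mul_assoc]
    _ = -trace (S * A ^ k * A) := by rw [h, neg_mul, trace_neg, mul_assoc, trace_mul_comm]
    _ = -trace (S * A ^ (k + 1)) := by rw [mul_assoc, pow_succ]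

lemma trace_mul_aeval_of_anticomm {R : Type*} [CommRing R] [IsAddTorsionFree R]
    {S A : Matrix m m R} (h : S * A = -(A * S)) (p : R[X]) :
    trace (S * aeval A p) = p.eval 0 * trace S := by
  induction p using Polynomial.induction_on' with
  | add p q hp hq => rw [map_add, mul_add, trace_add, hp, hq, eval_add, add_mul]
  | monomial k c =>
    rw [aeval_monomial, Algebra.algebraMap_eq_smul_one, smul_mul_assoc,
      one_mul, mul_smul_comm, trace_smul, eval_monomial, smul_eq_mul]
    rcases k with _ | k
    · simp
    · simp [trace_mul_pow_succ_eq_zero_of_anticomm h]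

section Abs

variable {A : Matrix m m ℝ}

lemma IsHermitian.cfc_abs_sq (hA : A.IsHermitian) : cfc (|·| : ℝ → ℝ) A ^ 2 = A ^ 2 := by
  rw [← cfc_pow _ 2 A (ha := hA.isSelfAdjoint), ← cfc_pow_id (R := ℝ) A 2 hA.isSelfAdjoint]
  simp only [sq_abs]

lemma IsHermitian.exists_isHermitian_sq_eq_cfc_abs (hA : A.IsHermitian) :
    ∃ C : Matrix m m ℝ, C.IsHermitian ∧ C ^ 2 = cfc (|·| : ℝ → ℝ) A := by
  refine ⟨cfc (fun x : ℝ => √|x|) A, IsSelfAdjoint.cfc.isHermitian, ?_⟩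
  rw [← cfc_pow _ 2 A (ha := hA.isSelfAdjoint)]
  exact cfc_congr fun x _ => Real.sq_sqrt (abs_nonneg x)

lemma IsHermitian.cfc_abs_apply_self_nonneg (hA : A.IsHermitian) (i : m) :
    0 ≤ cfc (|·| : ℝ → ℝ) A i i := by
  obtain ⟨C, hC, hCA⟩ := hA.exists_isHermitian_sq_eq_cfc_abs
  simpa [← hCA] using hC.pow_add_self_apply_self_nonneg 1 i

lemma IsHermitian.cfc_abs_apply_self_le_sqrt (hA : A.IsHermitian) (i : m) :
    cfc (|·| : ℝ → ℝ) A i i ≤ √((A ^ 2) i i) := by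
  have hB : (cfc (|·| : ℝ → ℝ) A).IsHermitian := IsSelfAdjoint.cfc.isHermitian
  have h := hB.sq_pow_add_apply_self_le 0 1 i
  simp only [zero_add, pow_one, pow_zero, one_apply_eq, one_mul, hA.cfc_abs_sq] at h
  exact (le_abs_self _).trans (Real.abs_le_sqrt h)

/-- With `mₖ = (|A|ᵏ)ᵢᵢ`, Cauchy–Schwarz for `|A|^{1/2}` gives `m₂² ≤ m₁ m₃` and `m₃² ≤ m₂ m₄`. -/
lemma IsHermitian.pow_two_apply_self_pow_three_le (hA : A.IsHermitian) (i : m) :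
    (A ^ 2) i i ^ 3 ≤ cfc (|·| : ℝ → ℝ) A i i ^ 2 * (A ^ 4) i i := by
  obtain ⟨C, hC, hCA⟩ := hA.exists_isHermitian_sq_eq_cfc_abs
  have hC4 : C ^ 4 = A ^ 2 := by rw [← hA.cfc_abs_sq, ← hCA, ← pow_mul]
  have hC8 : C ^ 8 = A ^ 4 := by rw [show 8 = 4 * 2 by rfl, pow_mul, hC4, ← pow_mul]
  have h₁₃ := hC.sq_pow_add_apply_self_le 1 3 i
  have h₂₄ := hC.sq_pow_add_apply_self_le 2 4 i
  have hm₂ := hC.pow_add_self_apply_self_nonneg 2 i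
  have hm₄ := hC.pow_add_self_apply_self_nonneg 4 i
  norm_num only [hCA, hC4, hC8] at h₁₃ h₂₄ hm₂ hm₄
  rcases hm₂.eq_or_lt with h₀ | hpos
  · rw [← h₀, zero_pow three_ne_zero]
    exact mul_nonneg (sq_nonneg _) hm₄
  · refine le_of_mul_le_mul_left ?_ hpos
    calc (A ^ 2) i i * (A ^ 2) i i ^ 3 = ((A ^ 2) i i ^ 2) ^ 2 := by ring
      _ ≤ (cfc (|·| : ℝ → ℝ) A i i * (C ^ 6) i i) ^ 2 := pow_le_pow_left₀ (sq_nonneg _) h₁₃ 2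
      _ = cfc (|·| : ℝ → ℝ) A i i ^ 2 * (C ^ 6) i i ^ 2 := by ring
      _ ≤ cfc (|·| : ℝ → ℝ) A i i ^ 2 * ((A ^ 2) i i * (A ^ 4) i i) := by gcongr
      _ = (A ^ 2) i i * (cfc (|·| : ℝ → ℝ) A i i ^ 2 * (A ^ 4) i i) := by ring

lemma IsHermitian.trace_mul_cfc_of_anticomm {A S : Matrix m m ℝ} (hA : A.IsHermitian)
    (h : S * A = -(A * S)) (f : ℝ → ℝ) : trace (S * cfc f A) = f 0 * trace S := by
  obtain ⟨q, hq0, hq⟩ := exists_cfc_eq_aeval hA.isSelfAdjoint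
    (hA.spectrum_real_eq_range_eigenvalues ▸ Set.finite_range _) f
  rw [hq, trace_mul_aeval_of_anticomm h, hq0]

end Abs

end Matrix

namespace SimpleGraph

variable {V : Type*} [Fintype V] [DecidableEq V] (G : SimpleGraph V) [DecidableRel G.Adj]

lemma adjMatrix_sq_apply_self (i : V) : (G.adjMatrix ℝ ^ 2) i i = G.degree i := by
  rw [sq, adjMatrix_mul_self_apply_self]

lemma adjMatrix_sq_apply_le_maxDegree (a c : V) : (G.adjMatrix ℝ ^ 2) a c ≤ G.maxDegree :=
  calc (G.adjMatrix ℝ ^ 2) a c = ∑ u ∈ G.neighborFinset a, G.adjMatrix ℝ u c := by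
        rw [sq, adjMatrix_mul_apply]
    _ ≤ ∑ u ∈ G.neighborFinset a, (1 : ℝ) := by
        gcongr with u
        by_cases huc : G.Adj u c <;> simp [huc]
    _ = G.degree a := by simp
    _ ≤ G.maxDegree := by exact_mod_cast G.degree_le_maxDegree a

lemma adjMatrix_pow_four_apply_self_le (i : V) :
    (G.adjMatrix ℝ ^ 4) i i ≤ G.degree i ^ 2 * G.maxDegree :=
  calc (G.adjMatrix ℝ ^ 4) i i
      = ∑ c ∈ G.neighborFinset i, ∑ a ∈ G.neighborFinset i, (G.adjMatrix ℝ ^ 2) a c := by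
        rw [show 4 = 1 + 2 + 1 from rfl, pow_succ, pow_add, pow_one, mul_adjMatrix_apply]
        simp only [adjMatrix_mul_apply]
    _ ≤ ∑ c ∈ G.neighborFinset i, ∑ a ∈ G.neighborFinset i, (G.maxDegree : ℝ) := by
        gcongr
        exact G.adjMatrix_sq_apply_le_maxDegree _ _
    _ = G.degree i ^ 2 * G.maxDegree := by
        simp only [sum_const, card_neighborFinset_eq_degree, nsmul_eq_mul]
        ring

variable {G}

lemma IsBipartiteWith.diagonal_sign_mul_adjMatrix {s : Finset V} {t : Set V}
    (h : G.IsBipartiteWith s t) :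
    diagonal (fun v => if v ∈ s then 1 else -1) * G.adjMatrix ℝ
      = -(G.adjMatrix ℝ * diagonal fun v => if v ∈ s then 1 else -1) := by
  ext u v
  rw [neg_apply, diagonal_mul, mul_diagonal]
  by_cases huv : G.Adj u v
  · rcases h.mem_of_adj huv with ⟨hu, hv⟩ | ⟨hu, hv⟩
    · have hv' : v ∉ s := Set.disjoint_right.mp h.disjoint hv
      simp [huv, mem_coe.mp hu, hv']
    · have hu' : u ∉ s := Set.disjoint_right.mp h.disjoint hu
      simp [huv, mem_coe.mp hv, hu']
  · simp [huv]

lemma IsBipartiteWith.sum_cfc_abs_adjMatrix_apply_self_eq {s : Finset V} {t : Set V}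
    (h : G.IsBipartiteWith s t) :
    ∑ v ∈ s, cfc (|·| : ℝ → ℝ) (G.adjMatrix ℝ) v v
      = ∑ v ∈ sᶜ, cfc (|·| : ℝ → ℝ) (G.adjMatrix ℝ) v v := by
  have htr := (G.isHermitian_adjMatrix ℝ).trace_mul_cfc_of_anticomm h.diagonal_sign_mul_adjMatrix
    (|·|)
  rw [abs_zero, zero_mul, trace, ← sum_add_sum_compl s] at htr
  simp only [diag_apply, diagonal_mul, ite_mul, one_mul, neg_one_mul] at htr
  rwa [sum_ite_of_true fun _ => id, sum_ite_of_false fun _ => mem_compl.mp, sum_neg_distrib,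
    ← sub_eq_add_neg, sub_eq_zero] at htr

end SimpleGraph

lemma vertexEnergy_eq_cfc_abs {n : ℕ} (G : SimpleGraph (Fin n)) [DecidableRel G.Adj]
    (i : Fin n) : vertexEnergy G i = cfc (|·| : ℝ → ℝ) (G.adjMatrix ℝ) i i := by
  have hA := G.isHermitian_adjMatrix ℝ
  have hX := (posSemidef_self_mul_conjTranspose (G.adjMatrix ℝ)).1
  change hX.cfc Real.sqrt i i = _
  rw [← hX.cfc_eq Real.sqrt, hA.eq, ← sq, ← cfc_pow_id (R := ℝ) _ 2 hA.isSelfAdjoint,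
    ← cfc_comp _ _ _ hA.isSelfAdjoint,
    cfc_congr (f := Real.sqrt ∘ (· ^ 2)) fun x _ => Real.sqrt_sq_eq_abs x]

lemma vertexEnergy_le_sqrt_degree {n : ℕ} (G : SimpleGraph (Fin n)) [DecidableRel G.Adj]
    (i : Fin n) : vertexEnergy G i ≤ √(G.degree i) := by
  simpa [vertexEnergy_eq_cfc_abs, G.adjMatrix_sq_apply_self] using
    (G.isHermitian_adjMatrix ℝ).cfc_abs_apply_self_le_sqrt i

lemma sqrt_degree_div_sqrt_maxDegree_le_vertexEnergy {n : ℕ} (G : SimpleGraph (Fin n))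
    [DecidableRel G.Adj] (i : Fin n) : √(G.degree i) / √(G.maxDegree) ≤ vertexEnergy G i := by
  have hA := G.isHermitian_adjMatrix ℝ
  have he := hA.cfc_abs_apply_self_nonneg i
  have hd₃ : (G.degree i : ℝ) ^ 3
      ≤ cfc (|·| : ℝ → ℝ) (G.adjMatrix ℝ) i i ^ 2 * (G.degree i ^ 2 * G.maxDegree) := by
    calc (G.degree i : ℝ) ^ 3 = (G.adjMatrix ℝ ^ 2) i i ^ 3 := by rw [G.adjMatrix_sq_apply_self]
      _ ≤ cfc (|·| : ℝ → ℝ) (G.adjMatrix ℝ) i i ^ 2 * (G.adjMatrix ℝ ^ 4) i i :=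
        hA.pow_two_apply_self_pow_three_le i
      _ ≤ _ := by gcongr; exact G.adjMatrix_pow_four_apply_self_le i
  rw [vertexEnergy_eq_cfc_abs]
  set e := cfc (|·| : ℝ → ℝ) (G.adjMatrix ℝ) i i
  set d : ℝ := (G.degree i : ℝ)
  set Δ : ℝ := (G.maxDegree : ℝ)
  have hd₀ : 0 ≤ d := Nat.cast_nonneg _
  have hd : d ≤ e ^ 2 * Δ := by
    rcases hd₀.eq_or_lt with h₀ | hpos
    · rw [← h₀]
      positivity
    · refine le_of_mul_le_mul_left ?_ (pow_pos hpos 2)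
      linarith
  refine div_le_of_le_mul₀ (Real.sqrt_nonneg _) he ?_
  calc √d ≤ √(e ^ 2 * Δ) := Real.sqrt_le_sqrt hd
    _ = e * √Δ := by rw [Real.sqrt_mul (sq_nonneg e), Real.sqrt_sq he]

theorem stmt_9_general {n : ℕ} (G : SimpleGraph (Fin n)) [DecidableRel G.Adj]
    (V₁ V₂ : Finset (Fin n)) (hdisj : Disjoint V₁ V₂)
    (hbip : ∀ u v : Fin n, G.Adj u v → (u ∈ V₁ ∧ v ∈ V₂) ∨ (u ∈ V₂ ∧ v ∈ V₁)) :
    (2 / Real.sqrt (G.maxDegree)) * ∑ v ∈ V₁, Real.sqrt (G.degree v) ≤ graphEnergy G ∧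
    graphEnergy G ≤ 2 * ∑ v ∈ V₁, Real.sqrt (G.degree v) := by
  have hG : G.IsBipartiteWith V₁ V₂ := ⟨disjoint_coe.mpr hdisj, hbip⟩
  have hE : graphEnergy G = 2 * ∑ v ∈ V₁, vertexEnergy G v := by
    simp only [graphEnergy, vertexEnergy_eq_cfc_abs]
    rw [← sum_add_sum_compl V₁, ← hG.sum_cfc_abs_adjMatrix_apply_self_eq, two_mul]
  rw [hE, div_mul_eq_mul_div, mul_div_assoc, sum_div]
  exact ⟨by gcongr with v; exact sqrt_degree_div_sqrt_maxDegree_le_vertexEnergy G v,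
    by gcongr with v; exact vertexEnergy_le_sqrt_degree G v⟩

theorem stmt_9 {n : ℕ} (G : SimpleGraph (Fin n)) [DecidableRel G.Adj]
    (hedge : G.edgeSet.Nonempty)
    (V₁ V₂ : Finset (Fin n)) (hdisj : Disjoint V₁ V₂) (hcover : V₁ ∪ V₂ = Finset.univ)
    (hbip : ∀ u v : Fin n, G.Adj u v → (u ∈ V₁ ∧ v ∈ V₂) ∨ (u ∈ V₂ ∧ v ∈ V₁)) :
    (2 / Real.sqrt (G.maxDegree)) * ∑ v ∈ V₁, Real.sqrt (G.degree v) ≤ graphEnergy G ∧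
    graphEnergy G ≤ 2 * ∑ v ∈ V₁, Real.sqrt (G.degree v) :=
  stmt_9_general G V₁ V₂ hdisj hbip
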